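/- Under the rank condition: B₁M₁ = B₁, B₂M₁ = B₂N₁ = B₂, B₁Y = B₂Y = I_G, C₁Y = 0, C₁X₁ = 0, C₁P̄[M₁Y] = 0, C₁M₁ = C₁M̄[M₁Y] = C₁, M₁Ψ₀M₁ = M₁Ψ₀ = Ψ₀M₁ = Ψ₀; consequently β̃ − β̂ = C₁y = C₁(M₁y) and (β̃−β̂)ᵀΔ̂⁻¹(β̃−β̂) = yᵀΨ₀y = (M₁y)ᵀΨ₀(M₁y). -/

import Mathlib

open Matrix

variable {T G k₁ k₂ : ℕ}

/-- Orthogonal projection `P̄[A] = A(AᵀA)⁻¹Aᵀ` onto the column space of `A`. -/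
noncomputable def projM {n : Type*} [Fintype n] [DecidableEq n]
    (A : Matrix (Fin T) n ℝ) : Matrix (Fin T) (Fin T) ℝ :=
  A * (Aᵀ * A)⁻¹ * Aᵀ

/-- The annihilator `M̄[A] = I - P̄[A]`. -/
noncomputable def annM {n : Type*} [Fintype n] [DecidableEq n]
    (A : Matrix (Fin T) n ℝ) : Matrix (Fin T) (Fin T) ℝ :=
  1 - projM A

noncomputable def M1 (X₁ : Matrix (Fin T) (Fin k₁) ℝ) : Matrix (Fin T) (Fin T) ℝ :=
  annM X₁

noncomputable def Pm (X₁ : Matrix (Fin T) (Fin k₁) ℝ) (X₂ : Matrix (Fin T) (Fin k₂) ℝ) :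
    Matrix (Fin T) (Fin T) ℝ :=
  projM (fromCols X₁ X₂)

noncomputable def Mm (X₁ : Matrix (Fin T) (Fin k₁) ℝ) (X₂ : Matrix (Fin T) (Fin k₂) ℝ) :
    Matrix (Fin T) (Fin T) ℝ :=
  annM (fromCols X₁ X₂)

noncomputable def N1 (X₁ : Matrix (Fin T) (Fin k₁) ℝ) (X₂ : Matrix (Fin T) (Fin k₂) ℝ) :
    Matrix (Fin T) (Fin T) ℝ :=
  M1 X₁ * Pm X₁ X₂

noncomputable def B1 (Y : Matrix (Fin T) (Fin G) ℝ) (X₁ : Matrix (Fin T) (Fin k₁) ℝ) :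
    Matrix (Fin G) (Fin T) ℝ :=
  (Yᵀ * M1 X₁ * Y)⁻¹ * (Yᵀ * M1 X₁)

noncomputable def B2 (Y : Matrix (Fin T) (Fin G) ℝ) (X₁ : Matrix (Fin T) (Fin k₁) ℝ)
    (X₂ : Matrix (Fin T) (Fin k₂) ℝ) : Matrix (Fin G) (Fin T) ℝ :=
  (Yᵀ * N1 X₁ X₂ * Y)⁻¹ * (Yᵀ * N1 X₁ X₂)

noncomputable def C1 (Y : Matrix (Fin T) (Fin G) ℝ) (X₁ : Matrix (Fin T) (Fin k₁) ℝ)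
    (X₂ : Matrix (Fin T) (Fin k₂) ℝ) : Matrix (Fin G) (Fin T) ℝ :=
  B2 Y X₁ X₂ - B1 Y X₁

/-- OLS estimator `β̂`. -/
noncomputable def betaOLS (y : Fin T → ℝ) (Y : Matrix (Fin T) (Fin G) ℝ)
    (X₁ : Matrix (Fin T) (Fin k₁) ℝ) : Fin G → ℝ :=
  B1 Y X₁ *ᵥ y

/-- 2SLS estimator `β̃`. -/
noncomputable def beta2S (y : Fin T → ℝ) (Y : Matrix (Fin T) (Fin G) ℝ)
    (X₁ : Matrix (Fin T) (Fin k₁) ℝ) (X₂ : Matrix (Fin T) (Fin k₂) ℝ) : Fin G → ℝ :=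
  B2 Y X₁ X₂ *ᵥ y

noncomputable def OmIV (Y : Matrix (Fin T) (Fin G) ℝ) (X₁ : Matrix (Fin T) (Fin k₁) ℝ)
    (X₂ : Matrix (Fin T) (Fin k₂) ℝ) : Matrix (Fin G) (Fin G) ℝ :=
  (T : ℝ)⁻¹ • (Yᵀ * N1 X₁ X₂ * Y)

noncomputable def OmLS (Y : Matrix (Fin T) (Fin G) ℝ) (X₁ : Matrix (Fin T) (Fin k₁) ℝ) :
    Matrix (Fin G) (Fin G) ℝ :=
  (T : ℝ)⁻¹ • (Yᵀ * M1 X₁ * Y)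

noncomputable def SigV (Y : Matrix (Fin T) (Fin G) ℝ) (X₁ : Matrix (Fin T) (Fin k₁) ℝ)
    (X₂ : Matrix (Fin T) (Fin k₂) ℝ) : Matrix (Fin G) (Fin G) ℝ :=
  (T : ℝ)⁻¹ • (Yᵀ * Mm X₁ X₂ * Y)

noncomputable def Dhat (Y : Matrix (Fin T) (Fin G) ℝ) (X₁ : Matrix (Fin T) (Fin k₁) ℝ)
    (X₂ : Matrix (Fin T) (Fin k₂) ℝ) : Matrix (Fin G) (Fin G) ℝ :=
  (OmIV Y X₁ X₂)⁻¹ - (OmLS Y X₁)⁻¹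

noncomputable def Psi0 (Y : Matrix (Fin T) (Fin G) ℝ) (X₁ : Matrix (Fin T) (Fin k₁) ℝ)
    (X₂ : Matrix (Fin T) (Fin k₂) ℝ) : Matrix (Fin T) (Fin T) ℝ :=
  (C1 Y X₁ X₂)ᵀ * (Dhat Y X₁ X₂)⁻¹ * C1 Y X₁ X₂

noncomputable def N2 (Y : Matrix (Fin T) (Fin G) ℝ) (X₁ : Matrix (Fin T) (Fin k₁) ℝ)
    (X₂ : Matrix (Fin T) (Fin k₂) ℝ) : Matrix (Fin T) (Fin T) ℝ :=
  1 - M1 X₁ * Y * B2 Y X₁ X₂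

noncomputable def Lam1 (Y : Matrix (Fin T) (Fin G) ℝ) (X₁ : Matrix (Fin T) (Fin k₁) ℝ)
    (X₂ : Matrix (Fin T) (Fin k₂) ℝ) : Matrix (Fin T) (Fin T) ℝ :=
  (T : ℝ)⁻¹ • (N1 X₁ X₂ * annM (N1 X₁ X₂ * Y) * N1 X₁ X₂)

noncomputable def Lam2 (Y : Matrix (Fin T) (Fin G) ℝ) (X₁ : Matrix (Fin T) (Fin k₁) ℝ)
    (X₂ : Matrix (Fin T) (Fin k₂) ℝ) : Matrix (Fin T) (Fin T) ℝ :=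
  M1 X₁ * ((T : ℝ)⁻¹ • annM (M1 X₁ * Y) - Psi0 Y X₁ X₂) * M1 X₁

noncomputable def Lam3 (Y : Matrix (Fin T) (Fin G) ℝ) (X₁ : Matrix (Fin T) (Fin k₁) ℝ)
    (X₂ : Matrix (Fin T) (Fin k₂) ℝ) : Matrix (Fin T) (Fin T) ℝ :=
  (T : ℝ)⁻¹ • (M1 X₁ * (N2 Y X₁ X₂)ᵀ * N2 Y X₁ X₂ * M1 X₁)

noncomputable def Lam4 (Y : Matrix (Fin T) (Fin G) ℝ) (X₁ : Matrix (Fin T) (Fin k₁) ℝ) :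
    Matrix (Fin T) (Fin T) ℝ :=
  (T : ℝ)⁻¹ • (M1 X₁ * annM (M1 X₁ * Y) * M1 X₁)

def Ybar (Y : Matrix (Fin T) (Fin G) ℝ) (X₁ : Matrix (Fin T) (Fin k₁) ℝ) :
    Matrix (Fin T) (Fin G ⊕ Fin k₁) ℝ :=
  fromCols Y X₁

def Zfull (Y : Matrix (Fin T) (Fin G) ℝ) (X₁ : Matrix (Fin T) (Fin k₁) ℝ)
    (X₂ : Matrix (Fin T) (Fin k₂) ℝ) : Matrix (Fin T) (Fin G ⊕ (Fin k₁ ⊕ Fin k₂)) ℝ :=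
  fromCols Y (fromCols X₁ X₂)

noncomputable def PsiR (Y : Matrix (Fin T) (Fin G) ℝ) (X₁ : Matrix (Fin T) (Fin k₁) ℝ)
    (X₂ : Matrix (Fin T) (Fin k₂) ℝ) : Matrix (Fin T) (Fin T) ℝ :=
  (T : ℝ)⁻¹ • (annM (Ybar Y X₁) - annM (Zfull Y X₁ X₂))

noncomputable def LamR (Y : Matrix (Fin T) (Fin G) ℝ) (X₁ : Matrix (Fin T) (Fin k₁) ℝ)
    (X₂ : Matrix (Fin T) (Fin k₂) ℝ) : Matrix (Fin T) (Fin T) ℝ :=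
  (T : ℝ)⁻¹ • annM (Zfull Y X₁ X₂)

/-- `σ̂² = (1/T)(y−Yβ̂)ᵀM₁(y−Yβ̂)`. -/
noncomputable def sigHat2 (y : Fin T → ℝ) (Y : Matrix (Fin T) (Fin G) ℝ)
    (X₁ : Matrix (Fin T) (Fin k₁) ℝ) : ℝ :=
  (T : ℝ)⁻¹ * ((y - Y *ᵥ betaOLS y Y X₁) ⬝ᵥ (M1 X₁ *ᵥ (y - Y *ᵥ betaOLS y Y X₁)))

/-- `σ̃² = (1/T)(y−Yβ̃)ᵀM₁(y−Yβ̃)`. -/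
noncomputable def sigTil2 (y : Fin T → ℝ) (Y : Matrix (Fin T) (Fin G) ℝ)
    (X₁ : Matrix (Fin T) (Fin k₁) ℝ) (X₂ : Matrix (Fin T) (Fin k₂) ℝ) : ℝ :=
  (T : ℝ)⁻¹ * ((y - Y *ᵥ beta2S y Y X₁ X₂) ⬝ᵥ (M1 X₁ *ᵥ (y - Y *ᵥ beta2S y Y X₁ X₂)))

/-- `σ̃₁² = (1/T)(y−Yβ̃)ᵀN₁(y−Yβ̃)`. -/
noncomputable def sigTil1sq (y : Fin T → ℝ) (Y : Matrix (Fin T) (Fin G) ℝ)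
    (X₁ : Matrix (Fin T) (Fin k₁) ℝ) (X₂ : Matrix (Fin T) (Fin k₂) ℝ) : ℝ :=
  (T : ℝ)⁻¹ * ((y - Y *ᵥ beta2S y Y X₁ X₂) ⬝ᵥ (N1 X₁ X₂ *ᵥ (y - Y *ᵥ beta2S y Y X₁ X₂)))

/-- `σ̃₂² = σ̂² − (β̃−β̂)ᵀΔ̂⁻¹(β̃−β̂)`. -/
noncomputable def sigTil2sq (y : Fin T → ℝ) (Y : Matrix (Fin T) (Fin G) ℝ)
    (X₁ : Matrix (Fin T) (Fin k₁) ℝ) (X₂ : Matrix (Fin T) (Fin k₂) ℝ) : ℝ :=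
  sigHat2 y Y X₁ -
    (beta2S y Y X₁ X₂ - betaOLS y Y X₁) ⬝ᵥ
      ((Dhat Y X₁ X₂)⁻¹ *ᵥ (beta2S y Y X₁ X₂ - betaOLS y Y X₁))

/-- The rank condition: `X₁`, `X = [X₁, X₂]`, `[Y, X]` and `[P̄[X]Y, X₁]` all have
full column rank. -/
def RankCond (Y : Matrix (Fin T) (Fin G) ℝ) (X₁ : Matrix (Fin T) (Fin k₁) ℝ)
    (X₂ : Matrix (Fin T) (Fin k₂) ℝ) : Prop :=
  X₁.rank = k₁ ∧ (fromCols X₁ X₂).rank = k₁ + k₂ ∧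
    (fromCols Y (fromCols X₁ X₂)).rank = G + (k₁ + k₂) ∧
    (fromCols (Pm X₁ X₂ * Y) X₁).rank = G + k₁

/-! Both `B₁` and `B₂` have the shape `(YᵀWY)⁻¹YᵀW` with `W` symmetric idempotent: `W = M₁`,
and `W = N₁ = M₁P̄[X] = P̄[X] − P̄[X₁]`, a projection because the columns of `X₁` lie in the column
space of `X`. Hence `BᵢY = I`, and `Bᵢ` is unchanged by right multiplication with any matrix that `W`
absorbs; as `N₁M₁ = N₁` and `M₁X₁ = N₁X₁ = 0`, `C₁ = B₂ − B₁` kills `Y` and `X₁` and is absorbed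
by `M₁`. The one non-algebraic input is the invertibility of `YᵀM₁Y` and of
`YᵀN₁Y = (P̄[X]Y)ᵀM₁(P̄[X]Y)`: when `[A, B]` has full column rank, so does `M̄[B]A`, and then
`AᵀM̄[B]A = (M̄[B]A)ᵀ(M̄[B]A)` is invertible. -/

section Rank

variable {K : Type*} [Field K] {m n : Type*} [Fintype n] {A : Matrix m n K}

lemma Matrix.mulVec_injective_of_rank_eq_card (h : A.rank = Fintype.card n) :
    Function.Injective A.mulVec := by
  rw [Matrix.mulVec_injective_iff, linearIndependent_iff_card_eq_finrank_span, Set.finrank,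
    ← rank_eq_finrank_span_cols, h]

lemma Matrix.isUnit_transpose_mul_self_of_mulVec_injective [LinearOrder K] [IsStrictOrderedRing K]
    [Fintype m] [DecidableEq n] (h : Function.Injective A.mulVec) : IsUnit (Aᵀ * A) := by
  refine mulVec_injective_iff_isUnit.mp (LinearMap.ker_eq_bot (f := (Aᵀ * A).mulVecLin).mp ?_)
  rw [ker_mulVecLin_transpose_mul_self]
  exact LinearMap.ker_eq_bot.mpr h

end Rank

section Projection

variable {n p : Type*} [Fintype n] [Fintype p] [DecidableEq p]
  {A : Matrix (Fin T) n ℝ} {B : Matrix (Fin T) p ℝ}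

lemma projM_mul_self (hB : IsUnit (Bᵀ * B)) : projM B * B = B := by
  simp only [projM, Matrix.mul_assoc]
  rw [nonsing_inv_mul _ ((isUnit_iff_isUnit_det _).mp hB), Matrix.mul_one]

lemma projM_transpose : (projM B)ᵀ = projM B := by
  rw [projM, transpose_mul, transpose_mul, transpose_transpose, transpose_nonsing_inv,
    transpose_mul, transpose_transpose, Matrix.mul_assoc]

lemma isIdempotentElem_projM (hB : IsUnit (Bᵀ * B)) : IsIdempotentElem (projM B) :=
  calc projM B * projM B = projM B * B * (Bᵀ * B)⁻¹ * Bᵀ := by simp only [projM, Matrix.mul_assoc]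
    _ = projM B := by rw [projM_mul_self hB, projM]

lemma annM_transpose : (annM B)ᵀ = annM B := by
  rw [annM, transpose_sub, transpose_one, projM_transpose]

lemma isIdempotentElem_annM (hB : IsUnit (Bᵀ * B)) : IsIdempotentElem (annM B) :=
  (isIdempotentElem_projM hB).one_sub

lemma annM_mul_self (hB : IsUnit (Bᵀ * B)) : annM B * B = 0 := by
  rw [annM, Matrix.sub_mul, Matrix.one_mul, projM_mul_self hB, sub_self]

lemma projM_fromCols_mul_left [DecidableEq n] (h : IsUnit ((fromCols A B)ᵀ * fromCols A B)) :
    projM (fromCols A B) * A = A := by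
  have h' := projM_mul_self h
  rw [mul_fromCols] at h'
  exact (fromCols_inj h').1

section Nested

variable [DecidableEq n] (hAB : projM B * A = A)
include hAB

lemma projM_mul_projM_of_mul_eq : projM B * projM A = projM A := by
  change projM B * (A * (Aᵀ * A)⁻¹ * Aᵀ) = A * (Aᵀ * A)⁻¹ * Aᵀ
  rw [← Matrix.mul_assoc, ← Matrix.mul_assoc, hAB]

lemma projM_mul_projM_of_mul_eq' : projM A * projM B = projM A := by
  simpa only [transpose_mul, projM_transpose] using
    congrArg transpose (projM_mul_projM_of_mul_eq hAB)

lemma annM_mul_projM_eq_sub : annM A * projM B = projM B - projM A := by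
  rw [annM, Matrix.sub_mul, Matrix.one_mul, projM_mul_projM_of_mul_eq' hAB]

lemma annM_mul_projM_mul_self (hA : IsUnit (Aᵀ * A)) : annM A * projM B * A = 0 := by
  rw [Matrix.mul_assoc, hAB, annM_mul_self hA]

lemma annM_mul_projM_mul_annM (hA : IsUnit (Aᵀ * A)) :
    annM A * projM B * annM A = annM A * projM B := by
  rw [annM_mul_projM_eq_sub hAB, annM, Matrix.mul_sub, Matrix.sub_mul, Matrix.sub_mul,
    projM_mul_projM_of_mul_eq hAB, (isIdempotentElem_projM hA).eq, Matrix.mul_one, sub_self,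
    sub_zero, Matrix.mul_one]

lemma isIdempotentElem_annM_mul_projM (hA : IsUnit (Aᵀ * A)) (hB : IsUnit (Bᵀ * B)) :
    IsIdempotentElem (annM A * projM B) := by
  rw [IsIdempotentElem, ← Matrix.mul_assoc, annM_mul_projM_mul_annM hAB hA, Matrix.mul_assoc,
    (isIdempotentElem_projM hB).eq]

lemma projM_mul_annM_mul_projM (hB : IsUnit (Bᵀ * B)) :
    projM B * annM A * projM B = annM A * projM B := by
  rw [annM_mul_projM_eq_sub hAB, annM, Matrix.mul_sub, Matrix.sub_mul,
    Matrix.mul_one, (isIdempotentElem_projM hB).eq, projM_mul_projM_of_mul_eq hAB,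
    projM_mul_projM_of_mul_eq' hAB]

end Nested

lemma mulVec_injective_annM_mul (h : Function.Injective (fromCols A B).mulVec) :
    Function.Injective (annM B * A).mulVec := by
  have hker := (injective_iff_map_eq_zero (fromCols A B).mulVecLin).mp h
  refine (injective_iff_map_eq_zero (annM B * A).mulVecLin).mpr fun v hv => ?_
  set w := ((Bᵀ * B)⁻¹ * Bᵀ * A) *ᵥ v
  have hAv : A *ᵥ v = B *ᵥ w := by
    rw [mulVecLin_apply, annM, Matrix.sub_mul, Matrix.one_mul, sub_mulVec, sub_eq_zero] at hv
    rw [hv, mulVec_mulVec, projM]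
    simp only [Matrix.mul_assoc]
  have hv0 := hker (Sum.elim v (-w))
    (by rw [mulVecLin_apply, fromCols_mulVec_sumElim, mulVec_neg, hAv, add_neg_cancel])
  exact funext fun i => congrFun hv0 (Sum.inl i)

lemma isUnit_transpose_mul_annM_mul [DecidableEq n] (hB : IsUnit (Bᵀ * B))
    (h : Function.Injective (fromCols A B).mulVec) : IsUnit (Aᵀ * annM B * A) := by
  have hMA := isUnit_transpose_mul_self_of_mulVec_injective (mulVec_injective_annM_mul h)
  rwa [transpose_mul, annM_transpose, Matrix.mul_assoc, ← Matrix.mul_assoc (annM B),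
    (isIdempotentElem_annM hB).eq, ← Matrix.mul_assoc] at hMA

variable {l : Type*} {C : Matrix l (Fin T) ℝ}

lemma mul_projM_eq_zero_of_mul_eq_zero (h : C * B = 0) : C * projM B = 0 := by
  rw [projM, ← Matrix.mul_assoc, ← Matrix.mul_assoc, h, Matrix.zero_mul, Matrix.zero_mul]

lemma mul_annM_eq_self_of_mul_eq_zero (h : C * B = 0) : C * annM B = C := by
  rw [annM, Matrix.mul_sub, Matrix.mul_one, mul_projM_eq_zero_of_mul_eq_zero h, sub_zero]

end Projection

section WeightedLeastSquares

variable {R : Type*} [CommRing R] {m n p : Type*} [Fintype m] [Fintype n] [DecidableEq n]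
  {W : Matrix m m R} {Y : Matrix m n R}

noncomputable def wlsCoef (W : Matrix m m R) (Y : Matrix m n R) : Matrix n m R :=
  (Yᵀ * W * Y)⁻¹ * (Yᵀ * W)

lemma wlsCoef_mul_self (h : IsUnit (Yᵀ * W * Y)) : wlsCoef W Y * Y = 1 := by
  rw [wlsCoef, Matrix.mul_assoc, nonsing_inv_mul _ ((isUnit_iff_isUnit_det _).mp h)]

lemma wlsCoef_mul (Q : Matrix m p R) :
    wlsCoef W Y * Q = (Yᵀ * W * Y)⁻¹ * (Yᵀ * (W * Q)) := by
  simp only [wlsCoef, Matrix.mul_assoc]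

lemma wlsCoef_mul_of_mul_eq {Q : Matrix m m R} (h : W * Q = W) : wlsCoef W Y * Q = wlsCoef W Y := by
  rw [wlsCoef_mul, h, wlsCoef]

lemma wlsCoef_mul_eq_zero_of_mul_eq_zero {Q : Matrix m p R} (h : W * Q = 0) :
    wlsCoef W Y * Q = 0 := by
  rw [wlsCoef_mul, h, Matrix.mul_zero, Matrix.mul_zero]

end WeightedLeastSquares

section Sandwich

variable {R : Type*} [CommRing R] {m n : Type*} [Fintype m] [Fintype n]
  {C : Matrix m n R} {D : Matrix m m R} {M : Matrix n n R}

lemma mul_transpose_mul_mul_of_mul_eq (hM : Mᵀ = M) (hC : C * M = C) :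
    M * (Cᵀ * D * C) = Cᵀ * D * C := by
  rw [← Matrix.mul_assoc, ← Matrix.mul_assoc, ← hM, ← transpose_mul, hC]

lemma transpose_mul_mul_mul_of_mul_eq (hC : C * M = C) : Cᵀ * D * C * M = Cᵀ * D * C := by
  rw [Matrix.mul_assoc, hC]

lemma dotProduct_transpose_mul_mul_mulVec (u : n → R) :
    u ⬝ᵥ ((Cᵀ * D * C) *ᵥ u) = (C *ᵥ u) ⬝ᵥ (D *ᵥ (C *ᵥ u)) := by
  rw [← mulVec_mulVec, ← mulVec_mulVec, dotProduct_mulVec u, vecMul_transpose]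

end Sandwich

section Exogeneity

variable {Y : Matrix (Fin T) (Fin G) ℝ} {X₁ : Matrix (Fin T) (Fin k₁) ℝ}
  {X₂ : Matrix (Fin T) (Fin k₂) ℝ}

namespace RankCond

variable (hrank : RankCond Y X₁ X₂)
include hrank

lemma isUnit_gram₁ : IsUnit (X₁ᵀ * X₁) :=
  isUnit_transpose_mul_self_of_mulVec_injective
    (mulVec_injective_of_rank_eq_card (by simpa using hrank.1))

lemma isUnit_gram : IsUnit ((fromCols X₁ X₂)ᵀ * fromCols X₁ X₂) :=
  isUnit_transpose_mul_self_of_mulVec_injective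
    (mulVec_injective_of_rank_eq_card (by simpa using hrank.2.1))

lemma Pm_mul_X₁ : Pm X₁ X₂ * X₁ = X₁ :=
  projM_fromCols_mul_left hrank.isUnit_gram

lemma mulVec_injective_fromCols_Y_X₁ : Function.Injective (fromCols Y X₁).mulVec := by
  have hZ := mulVec_injective_iff.mp
    (mulVec_injective_of_rank_eq_card (A := fromCols Y (fromCols X₁ X₂))
      (by simpa using hrank.2.2.1))
  have hcol : (fromCols Y X₁).col = (fromCols Y (fromCols X₁ X₂)).col ∘ Sum.map id Sum.inl := by
    funext j
    rcases j with j | j <;> rfl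
  rw [mulVec_injective_iff, hcol]
  exact hZ.comp _ (Sum.map_injective.mpr ⟨Function.injective_id, Sum.inl_injective⟩)

lemma isUnit_OLS : IsUnit (Yᵀ * M1 X₁ * Y) :=
  isUnit_transpose_mul_annM_mul hrank.isUnit_gram₁ hrank.mulVec_injective_fromCols_Y_X₁

lemma isUnit_IV : IsUnit (Yᵀ * N1 X₁ X₂ * Y) := by
  have h := isUnit_transpose_mul_annM_mul hrank.isUnit_gram₁
    (mulVec_injective_of_rank_eq_card (A := fromCols (Pm X₁ X₂ * Y) X₁)
      (by simpa using hrank.2.2.2))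
  have heq : (Pm X₁ X₂ * Y)ᵀ * annM X₁ * (Pm X₁ X₂ * Y) = Yᵀ * N1 X₁ X₂ * Y := by
    rw [N1, M1, Pm, ← projM_mul_annM_mul_projM hrank.Pm_mul_X₁ hrank.isUnit_gram, transpose_mul,
      projM_transpose]
    simp only [Matrix.mul_assoc]
  rwa [heq] at h

lemma N1_mul_M1 : N1 X₁ X₂ * M1 X₁ = N1 X₁ X₂ :=
  annM_mul_projM_mul_annM hrank.Pm_mul_X₁ hrank.isUnit_gram₁

lemma isIdempotentElem_N1 : IsIdempotentElem (N1 X₁ X₂) :=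
  isIdempotentElem_annM_mul_projM hrank.Pm_mul_X₁ hrank.isUnit_gram₁ hrank.isUnit_gram

lemma N1_mul_X₁ : N1 X₁ X₂ * X₁ = 0 :=
  annM_mul_projM_mul_self hrank.Pm_mul_X₁ hrank.isUnit_gram₁

end RankCond

end Exogeneity

theorem stmt5_general {T G k₁ k₂ : ℕ}
    (y : Fin T → ℝ) (Y : Matrix (Fin T) (Fin G) ℝ)
    (X₁ : Matrix (Fin T) (Fin k₁) ℝ) (X₂ : Matrix (Fin T) (Fin k₂) ℝ)
    (hrank : RankCond Y X₁ X₂) :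
    B1 Y X₁ * M1 X₁ = B1 Y X₁ ∧
    B2 Y X₁ X₂ * M1 X₁ = B2 Y X₁ X₂ ∧
    B2 Y X₁ X₂ * N1 X₁ X₂ = B2 Y X₁ X₂ ∧
    B1 Y X₁ * Y = 1 ∧
    B2 Y X₁ X₂ * Y = 1 ∧
    C1 Y X₁ X₂ * Y = 0 ∧
    C1 Y X₁ X₂ * X₁ = 0 ∧
    C1 Y X₁ X₂ * projM (M1 X₁ * Y) = 0 ∧
    C1 Y X₁ X₂ * M1 X₁ = C1 Y X₁ X₂ ∧
    C1 Y X₁ X₂ * annM (M1 X₁ * Y) = C1 Y X₁ X₂ ∧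
    M1 X₁ * Psi0 Y X₁ X₂ * M1 X₁ = Psi0 Y X₁ X₂ ∧
    M1 X₁ * Psi0 Y X₁ X₂ = Psi0 Y X₁ X₂ ∧
    Psi0 Y X₁ X₂ * M1 X₁ = Psi0 Y X₁ X₂ ∧
    beta2S y Y X₁ X₂ - betaOLS y Y X₁ = C1 Y X₁ X₂ *ᵥ y ∧
    beta2S y Y X₁ X₂ - betaOLS y Y X₁ = C1 Y X₁ X₂ *ᵥ (M1 X₁ *ᵥ y) ∧
    (beta2S y Y X₁ X₂ - betaOLS y Y X₁) ⬝ᵥ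
        ((Dhat Y X₁ X₂)⁻¹ *ᵥ (beta2S y Y X₁ X₂ - betaOLS y Y X₁))
      = y ⬝ᵥ (Psi0 Y X₁ X₂ *ᵥ y) ∧
    (beta2S y Y X₁ X₂ - betaOLS y Y X₁) ⬝ᵥ
        ((Dhat Y X₁ X₂)⁻¹ *ᵥ (beta2S y Y X₁ X₂ - betaOLS y Y X₁))
      = (M1 X₁ *ᵥ y) ⬝ᵥ (Psi0 Y X₁ X₂ *ᵥ (M1 X₁ *ᵥ y)) := by
  have hB₁M₁ : B1 Y X₁ * M1 X₁ = B1 Y X₁ :=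
    wlsCoef_mul_of_mul_eq (isIdempotentElem_annM hrank.isUnit_gram₁).eq
  have hB₂M₁ : B2 Y X₁ X₂ * M1 X₁ = B2 Y X₁ X₂ := wlsCoef_mul_of_mul_eq hrank.N1_mul_M1
  have hB₁Y : B1 Y X₁ * Y = 1 := wlsCoef_mul_self hrank.isUnit_OLS
  have hB₂Y : B2 Y X₁ X₂ * Y = 1 := wlsCoef_mul_self hrank.isUnit_IV
  have hC₁M₁ : C1 Y X₁ X₂ * M1 X₁ = C1 Y X₁ X₂ := by rw [C1, Matrix.sub_mul, hB₁M₁, hB₂M₁]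
  have hC₁Y : C1 Y X₁ X₂ * Y = 0 := by rw [C1, Matrix.sub_mul, hB₁Y, hB₂Y, sub_self]
  have hB₁X₁ : B1 Y X₁ * X₁ = 0 :=
    wlsCoef_mul_eq_zero_of_mul_eq_zero (annM_mul_self hrank.isUnit_gram₁)
  have hB₂X₁ : B2 Y X₁ X₂ * X₁ = 0 := wlsCoef_mul_eq_zero_of_mul_eq_zero hrank.N1_mul_X₁
  have hC₁X₁ : C1 Y X₁ X₂ * X₁ = 0 := by rw [C1, Matrix.sub_mul, hB₁X₁, hB₂X₁, sub_self]
  have hC₁M₁Y : C1 Y X₁ X₂ * (M1 X₁ * Y) = 0 := by rw [← Matrix.mul_assoc, hC₁M₁, hC₁Y]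
  have hM₁Ψ₀ : M1 X₁ * Psi0 Y X₁ X₂ = Psi0 Y X₁ X₂ :=
    mul_transpose_mul_mul_of_mul_eq annM_transpose hC₁M₁
  have hΨ₀M₁ : Psi0 Y X₁ X₂ * M1 X₁ = Psi0 Y X₁ X₂ := transpose_mul_mul_mul_of_mul_eq hC₁M₁
  have hβ : beta2S y Y X₁ X₂ - betaOLS y Y X₁ = C1 Y X₁ X₂ *ᵥ y := (sub_mulVec _ _ _).symm
  have hβM₁ : beta2S y Y X₁ X₂ - betaOLS y Y X₁ = C1 Y X₁ X₂ *ᵥ (M1 X₁ *ᵥ y) := by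
    rw [mulVec_mulVec, hC₁M₁, hβ]
  refine ⟨hB₁M₁, hB₂M₁, wlsCoef_mul_of_mul_eq hrank.isIdempotentElem_N1.eq, hB₁Y, hB₂Y, hC₁Y,
    hC₁X₁, mul_projM_eq_zero_of_mul_eq_zero hC₁M₁Y, hC₁M₁, mul_annM_eq_self_of_mul_eq_zero hC₁M₁Y,
    by rw [hM₁Ψ₀, hΨ₀M₁], hM₁Ψ₀, hΨ₀M₁, hβ, hβM₁, ?_, ?_⟩
  · rw [Psi0, dotProduct_transpose_mul_mul_mulVec, hβ]
  · rw [Psi0, dotProduct_transpose_mul_mul_mulVec, hβM₁]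

/-- **Properties of the exogeneity-statistic components.**  Under the rank condition:
`B₁M₁ = B₁`, `B₂M₁ = B₂N₁ = B₂`, `B₁Y = B₂Y = I_G`, `C₁Y = 0`, `C₁X₁ = 0`,
`C₁P̄[M₁Y] = 0`, `C₁M₁ = C₁M̄[M₁Y] = C₁`, `M₁Ψ₀M₁ = M₁Ψ₀ = Ψ₀M₁ = Ψ₀`; consequently
`β̃ − β̂ = C₁y = C₁(M₁y)` and `(β̃−β̂)ᵀΔ̂⁻¹(β̃−β̂) = yᵀΨ₀y = (M₁y)ᵀΨ₀(M₁y)`. -/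
theorem stmt5 {T G k₁ k₂ : ℕ}
    (hT : 0 < T) (hG : 0 < G) (hk₁ : 0 < k₁) (hk₂ : 0 < k₂)
    (y : Fin T → ℝ) (Y : Matrix (Fin T) (Fin G) ℝ)
    (X₁ : Matrix (Fin T) (Fin k₁) ℝ) (X₂ : Matrix (Fin T) (Fin k₂) ℝ)
    (hrank : RankCond Y X₁ X₂) :
    B1 Y X₁ * M1 X₁ = B1 Y X₁ ∧
    B2 Y X₁ X₂ * M1 X₁ = B2 Y X₁ X₂ ∧
    B2 Y X₁ X₂ * N1 X₁ X₂ = B2 Y X₁ X₂ ∧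
    B1 Y X₁ * Y = 1 ∧
    B2 Y X₁ X₂ * Y = 1 ∧
    C1 Y X₁ X₂ * Y = 0 ∧
    C1 Y X₁ X₂ * X₁ = 0 ∧
    C1 Y X₁ X₂ * projM (M1 X₁ * Y) = 0 ∧
    C1 Y X₁ X₂ * M1 X₁ = C1 Y X₁ X₂ ∧
    C1 Y X₁ X₂ * annM (M1 X₁ * Y) = C1 Y X₁ X₂ ∧
    M1 X₁ * Psi0 Y X₁ X₂ * M1 X₁ = Psi0 Y X₁ X₂ ∧
    M1 X₁ * Psi0 Y X₁ X₂ = Psi0 Y X₁ X₂ ∧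
    Psi0 Y X₁ X₂ * M1 X₁ = Psi0 Y X₁ X₂ ∧
    beta2S y Y X₁ X₂ - betaOLS y Y X₁ = C1 Y X₁ X₂ *ᵥ y ∧
    beta2S y Y X₁ X₂ - betaOLS y Y X₁ = C1 Y X₁ X₂ *ᵥ (M1 X₁ *ᵥ y) ∧
    (beta2S y Y X₁ X₂ - betaOLS y Y X₁) ⬝ᵥ
        ((Dhat Y X₁ X₂)⁻¹ *ᵥ (beta2S y Y X₁ X₂ - betaOLS y Y X₁))
      = y ⬝ᵥ (Psi0 Y X₁ X₂ *ᵥ y) ∧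
    (beta2S y Y X₁ X₂ - betaOLS y Y X₁) ⬝ᵥ
        ((Dhat Y X₁ X₂)⁻¹ *ᵥ (beta2S y Y X₁ X₂ - betaOLS y Y X₁))
      = (M1 X₁ *ᵥ y) ⬝ᵥ (Psi0 Y X₁ X₂ *ᵥ (M1 X₁ *ᵥ y)) :=
  stmt5_general y Y X₁ X₂ hrank
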